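/- arXiv:2510.07799 — 2 statements merged into one kernel-verified Lean document; each statement's English description precedes it below -/
import Mathlib

section
/- Let α, ᾱ' ∈ (0,1) and set ᾱ = α·ᾱ', β = 1 − α, and β̃ = ((1 − ᾱ')/(1 − ᾱ))·β. Fix real numbers a₀, aₜ, g, and define c₁ = (√ᾱ' · β)/(1 − ᾱ) and c₂ = (√α · (1 − ᾱ'))/(1 − ᾱ). Let μ̃ = c₁·a₀ + c₂·aₜ and μ_θ = c₁·g + c₂·aₜ. Then the Kullback–Leibler divergence between the Gaussian measures N(μ̃, β̃) and N(μ_θ, β̃) on ℝ equals (ᾱ'·β²)/(2·β̃·(1 − ᾱ)²) · (a₀ − g)², i.e., kl(gaussianReal μ̃ β̃, gaussianReal μ_θ β̃) = ENNReal.ofReal ((ᾱ'·β² / (2·β̃·(1 − ᾱ)²)) · (a₀ − g)²). -/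
open MeasureTheory ProbabilityTheory Real

open Classical in
/-- The Kullback–Leibler divergence between two measures: the integral of the
log-likelihood ratio when absolutely continuous and integrable, `⊤` otherwise. -/
noncomputable def kl (μ ν : Measure ℝ) : ENNReal :=
  if μ ≪ ν ∧ Integrable (llr μ ν) μ then ENNReal.ofReal (∫ x, llr μ ν x ∂μ) else ⊤

open scoped NNReal ENNReal

lemma integrable_id_mul_gaussianPDFReal (m : ℝ) (v : ℝ≥0) (hv : v ≠ 0) :
    Integrable (fun x ↦ x * gaussianPDFReal m v x) := by
  have hv' : (0:ℝ) < v := lt_of_le_of_ne v.coe_nonneg (by exact_mod_cast (Ne.symm hv))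
  have hb : (0:ℝ) < (2 * v)⁻¹ := by positivity
  have h1 : Integrable (fun y : ℝ ↦ (y + m) * gaussianPDFReal m v (y + m)) := by
    simp_rw [gaussianPDFReal_add, sub_self]
    have : (fun y : ℝ ↦ (y + m) * gaussianPDFReal 0 v y)
        = fun y : ℝ ↦ (1 / Real.sqrt (2 * π * v)) *
            (y * Real.exp (-(2 * (v:ℝ))⁻¹ * y ^ 2)) +
          (m * (1 / Real.sqrt (2 * π * v))) * Real.exp (-(2 * (v:ℝ))⁻¹ * y ^ 2) := by
      ext y
      simp only [gaussianPDFReal, sub_zero]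
      rw [show -y ^ 2 / (2 * (v:ℝ)) = -(2 * (v:ℝ))⁻¹ * y ^ 2 by field_simp]
      ring
    rw [this]
    exact ((integrable_mul_exp_neg_mul_sq hb).const_mul _).add
      ((integrable_exp_neg_mul_sq hb).const_mul _)
  have := h1.comp_sub_right m
  simpa using this

lemma integral_id_mul_gaussianPDFReal (m : ℝ) (v : ℝ≥0) (hv : v ≠ 0) :
    ∫ x, x * gaussianPDFReal m v x = m := by
  have h0 : ∫ y, y * gaussianPDFReal 0 v y = 0 := by
    have heven : ∀ y : ℝ, gaussianPDFReal 0 v (-y) = gaussianPDFReal 0 v y := by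
      intro y; simp [gaussianPDFReal, neg_sq]
    have h := integral_neg_eq_self (fun y : ℝ ↦ y * gaussianPDFReal 0 v y) volume
    simp only [heven, neg_mul] at h
    rw [integral_neg] at h
    linarith
  calc ∫ x, x * gaussianPDFReal m v x
      = ∫ y, (y + m) * gaussianPDFReal m v (y + m) := by
        rw [integral_add_right_eq_self (fun x ↦ x * gaussianPDFReal m v x) m]
    _ = ∫ y, (y * gaussianPDFReal 0 v y + m * gaussianPDFReal 0 v y) := by
        simp_rw [gaussianPDFReal_add, sub_self]; congr with y; ring
    _ = m := by
        rw [integral_add (integrable_id_mul_gaussianPDFReal 0 v hv)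
          ((integrable_gaussianPDFReal 0 v).const_mul m), h0, integral_const_mul,
          integral_gaussianPDFReal_eq_one 0 hv]
        ring

lemma gaussianReal_repr (m : ℝ) (v : ℝ≥0) (hv : v ≠ 0) :
    gaussianReal m v
      = (volume : Measure ℝ).withDensity
        (fun x ↦ ((gaussianPDFReal m v x).toNNReal : ℝ≥0∞)) := by
  rw [gaussianReal_of_var_ne_zero m hv]; rfl

lemma integrable_id_gaussianReal (m : ℝ) (v : ℝ≥0) (hv : v ≠ 0) :
    Integrable (fun x : ℝ ↦ x) (gaussianReal m v) := by
  rw [gaussianReal_of_var_ne_zero m hv,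
    integrable_withDensity_iff (measurable_gaussianPDF m v)
      (ae_of_all _ fun x ↦ ENNReal.ofReal_lt_top)]
  have : (fun x : ℝ ↦ x * (gaussianPDF m v x).toReal)
      = fun x ↦ x * gaussianPDFReal m v x := by
    ext x
    rw [gaussianPDF, ENNReal.toReal_ofReal (gaussianPDFReal_nonneg m v x)]
  rw [this]
  exact integrable_id_mul_gaussianPDFReal m v hv

lemma integral_id_gaussianReal (m : ℝ) (v : ℝ≥0) (hv : v ≠ 0) :
    ∫ x, x ∂(gaussianReal m v) = m := by
  rw [gaussianReal_repr m v hv,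
    integral_withDensity_eq_integral_smul
      ((measurable_gaussianPDFReal m v).real_toNNReal) (fun x : ℝ ↦ x)]
  have : (fun x : ℝ ↦ (gaussianPDFReal m v x).toNNReal • x)
      = fun x ↦ x * gaussianPDFReal m v x := by
    ext x
    rw [NNReal.smul_def, smul_eq_mul,
      Real.coe_toNNReal _ (gaussianPDFReal_nonneg m v x), mul_comm]
  rw [this]
  exact integral_id_mul_gaussianPDFReal m v hv

lemma kl_gaussian_same_var (m₁ m₂ : ℝ) (v : ℝ≥0) (hv : v ≠ 0) :
    kl (gaussianReal m₁ v) (gaussianReal m₂ v)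
      = ENNReal.ofReal ((m₁ - m₂) ^ 2 / (2 * v)) := by
  have hv' : (0:ℝ) < v := lt_of_le_of_ne v.coe_nonneg (by exact_mod_cast (Ne.symm hv))
  set L : ℝ → ℝ := fun x ↦ ((x - m₂) ^ 2 - (x - m₁) ^ 2) / (2 * v) with hLdef
  have hac : gaussianReal m₁ v ≪ gaussianReal m₂ v :=
    (gaussianReal_absolutelyContinuous m₁ hv).trans
      (gaussianReal_absolutelyContinuous' m₂ hv)
  have hac' : gaussianReal m₁ v ≪ (volume : Measure ℝ) :=
    gaussianReal_absolutelyContinuous m₁ hv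
  have hrn : (gaussianReal m₁ v).rnDeriv (gaussianReal m₂ v)
      =ᵐ[volume] fun x ↦ (gaussianPDF m₂ v x)⁻¹ * gaussianPDF m₁ v x := by
    rw [gaussianReal_of_var_ne_zero m₂ hv]
    have h1 := Measure.rnDeriv_withDensity_right (gaussianReal m₁ v) volume
      (f := gaussianPDF m₂ v) (measurable_gaussianPDF m₂ v).aemeasurable
      (ae_of_all _ fun x ↦ (gaussianPDF_pos m₂ hv x).ne')
      (ae_of_all _ fun x ↦ ENNReal.ofReal_ne_top)
    filter_upwards [h1, rnDeriv_gaussianReal m₁ v] with x hx hx'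
    rw [hx, hx']
  have hlog : ∀ (m : ℝ) (x : ℝ),
      Real.log (gaussianPDFReal m v x)
        = Real.log (Real.sqrt (2 * π * v))⁻¹ + (-(x - m) ^ 2 / (2 * v)) := by
    intro m x
    rw [gaussianPDFReal, Real.log_mul (by positivity) (Real.exp_ne_zero _), Real.log_exp]
  have hllr : llr (gaussianReal m₁ v) (gaussianReal m₂ v) =ᵐ[gaussianReal m₁ v] L := by
    filter_upwards [hac'.ae_eq hrn] with x hx
    rw [llr_def]
    simp only
    rw [hx, ENNReal.toReal_mul, ENNReal.toReal_inv, gaussianPDF, gaussianPDF,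
      ENNReal.toReal_ofReal (gaussianPDFReal_nonneg m₂ v x),
      ENNReal.toReal_ofReal (gaussianPDFReal_nonneg m₁ v x),
      Real.log_mul (inv_ne_zero (gaussianPDFReal_pos m₂ v x hv).ne')
        (gaussianPDFReal_pos m₁ v x hv).ne',
      Real.log_inv, hlog, hlog, hLdef]
    ring
  have hLint : Integrable L (gaussianReal m₁ v) := by
    have : L = fun x ↦ ((m₁ - m₂) / v) * x + ((m₂ ^ 2 - m₁ ^ 2) / (2 * v)) := by
      ext x; rw [hLdef]; field_simp; ring
    rw [this]
    exact (((integrable_id_gaussianReal m₁ v hv).const_mul _).add (integrable_const _))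
  have hint : Integrable (llr (gaussianReal m₁ v) (gaussianReal m₂ v)) (gaussianReal m₁ v) :=
    hLint.congr hllr.symm
  rw [kl, if_pos ⟨hac, hint⟩, integral_congr_ae hllr]
  congr 1
  have : ∫ x, L x ∂(gaussianReal m₁ v)
      = ((m₁ - m₂) / v) * (∫ x, x ∂(gaussianReal m₁ v)) + ((m₂ ^ 2 - m₁ ^ 2) / (2 * v)) := by
    have hrepr : L = fun x ↦ ((m₁ - m₂) / v) * x + ((m₂ ^ 2 - m₁ ^ 2) / (2 * v)) := by
      ext x; rw [hLdef]; field_simp; ring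
    rw [hrepr, integral_add ((integrable_id_gaussianReal m₁ v hv).const_mul _)
      (integrable_const _), integral_const_mul, integral_const]
    simp
  rw [this, integral_id_gaussianReal m₁ v hv]
  field_simp
  ring

theorem kl_gaussian_denoising (α ᾱ' : ℝ) (hα : α ∈ Set.Ioo (0 : ℝ) 1)
    (hᾱ' : ᾱ' ∈ Set.Ioo (0 : ℝ) 1) (a₀ aₜ g : ℝ) :
    let ᾱ := α * ᾱ'
    let β := 1 - α
    let βtilde := ((1 - ᾱ') / (1 - ᾱ)) * β
    let c₁ := Real.sqrt ᾱ' * β / (1 - ᾱ)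
    let c₂ := Real.sqrt α * (1 - ᾱ') / (1 - ᾱ)
    let μtilde := c₁ * a₀ + c₂ * aₜ
    let μθ := c₁ * g + c₂ * aₜ
    kl (gaussianReal μtilde βtilde.toNNReal) (gaussianReal μθ βtilde.toNNReal)
      = ENNReal.ofReal ((ᾱ' * β ^ 2 / (2 * βtilde * (1 - ᾱ) ^ 2)) * (a₀ - g) ^ 2) := by
  intro ᾱ β βtilde c₁ c₂ μtilde μθ
  obtain ⟨hα0, hα1⟩ := hα
  obtain ⟨hᾱ'0, hᾱ'1⟩ := hᾱ'
  have hᾱ1 : ᾱ < 1 := by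
    calc ᾱ = α * ᾱ' := rfl
    _ < 1 * 1 := by
      apply mul_lt_mul' hα1.le hᾱ'1 hᾱ'0.le one_pos
    _ = 1 := by ring
  have h1ᾱ : (0:ℝ) < 1 - ᾱ := by linarith
  have hβ : (0:ℝ) < β := by simp only [β]; linarith
  have hβt : (0:ℝ) < βtilde := by
    have : (0:ℝ) < 1 - ᾱ' := by linarith
    positivity
  have hvne : βtilde.toNNReal ≠ 0 := by
    simp [Real.toNNReal_eq_zero, not_le, hβt]
  have hvco : ((βtilde.toNNReal : ℝ≥0) : ℝ) = βtilde := Real.coe_toNNReal _ hβt.le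
  rw [kl_gaussian_same_var μtilde μθ βtilde.toNNReal hvne, hvco]
  congr 1
  have hdiff : μtilde - μθ = c₁ * (a₀ - g) := by simp only [μtilde, μθ]; ring
  rw [hdiff]
  have hc₁sq : c₁ ^ 2 = ᾱ' * β ^ 2 / (1 - ᾱ) ^ 2 := by
    simp only [c₁]
    rw [div_pow, mul_pow, Real.sq_sqrt hᾱ'0.le]
  rw [mul_pow, hc₁sq, div_mul_eq_mul_div, div_div, div_mul_eq_mul_div,
    mul_comm ((1 - ᾱ) ^ 2) (2 * βtilde)]
end

section
/- Let α, ᾱ' ∈ (0,1) and set ᾱ = α·ᾱ', β = 1 − α, β̃ = ((1 − ᾱ')/(1 − ᾱ))·β. Fix a₀, aₜ ∈ ℝ and let μ̃ = (√ᾱ'·β/(1 − ᾱ))·a₀ + (√α·(1 − ᾱ')/(1 − ᾱ))·aₜ. Then for every x ∈ ℝ: gaussianPDFReal (√α·x) β aₜ · gaussianPDFReal (√ᾱ'·a₀) (1 − ᾱ') x = gaussianPDFReal (√ᾱ·a₀) (1 − ᾱ) aₜ · gaussianPDFReal μ̃ β̃ x. -/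
open MeasureTheory ProbabilityTheory Real

theorem gaussian_bayes_identity (α ᾱ' : ℝ) (hα : α ∈ Set.Ioo (0 : ℝ) 1)
    (hᾱ' : ᾱ' ∈ Set.Ioo (0 : ℝ) 1) (a₀ aₜ : ℝ) :
    let ᾱ := α * ᾱ'
    let β := 1 - α
    let βtilde := ((1 - ᾱ') / (1 - ᾱ)) * β
    let μtilde := (Real.sqrt ᾱ' * β / (1 - ᾱ)) * a₀ + (Real.sqrt α * (1 - ᾱ') / (1 - ᾱ)) * aₜ
    ∀ x : ℝ,
      gaussianPDFReal (Real.sqrt α * x) β.toNNReal aₜ *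
          gaussianPDFReal (Real.sqrt ᾱ' * a₀) (1 - ᾱ').toNNReal x
        = gaussianPDFReal (Real.sqrt ᾱ * a₀) (1 - ᾱ).toNNReal aₜ *
            gaussianPDFReal μtilde βtilde.toNNReal x := by
  intro ᾱ β βtilde μtilde x
  obtain ⟨hα0, hα1⟩ := hα
  obtain ⟨hᾱ'0, hᾱ'1⟩ := hᾱ'
  have h1 : (0:ℝ) < 1 - α := by linarith
  have h2 : (0:ℝ) < 1 - ᾱ' := by linarith
  have h3 : (0:ℝ) < 1 - α * ᾱ' := by nlinarith
  have hβt : (0:ℝ) < ((1 - ᾱ') / (1 - α * ᾱ')) * (1 - α) := by positivity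
  unfold μtilde βtilde β ᾱ
  unfold gaussianPDFReal
  rw [Real.coe_toNNReal _ h1.le, Real.coe_toNNReal _ h2.le, Real.coe_toNNReal _ h3.le,
    Real.coe_toNNReal _ hβt.le]
  rw [Real.sqrt_mul hα0.le]
  set s := Real.sqrt α with hsdef
  set t := Real.sqrt ᾱ' with htdef
  have hs : s ^ 2 = α := Real.sq_sqrt hα0.le
  have ht : t ^ 2 = ᾱ' := Real.sq_sqrt hᾱ'0.le
  rw [← hs] at h1 h3 ⊢
  rw [← ht] at h2 h3 ⊢
  have key : ∀ a b c d a' b' c' d' : ℝ, a * c = a' * c' → b + d = b' + d' →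
      a⁻¹ * Real.exp b * (c⁻¹ * Real.exp d) = a'⁻¹ * Real.exp b' * (c'⁻¹ * Real.exp d') := by
    intro a b c d a' b' c' d' h h'
    rw [mul_mul_mul_comm, mul_mul_mul_comm (a'⁻¹), ← mul_inv, ← mul_inv, ← Real.exp_add,
      ← Real.exp_add, h, h']
  apply key
  · rw [← Real.sqrt_mul (by positivity), ← Real.sqrt_mul (by positivity)]
    congr 1
    field_simp
  · field_simp
    ring
end
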